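/- On an SI⁻-continuous T₀-space X, the relation ≪_Irr has the interpolation property: whenever z ≪_Irr x, there exists y ∈ X with z ≪_Irr y ≪_Irr x. -/
import Mathlib


universe u v w

open Set

/-- A preordered index type is a (nonempty) directed index set for nets. -/
def IsDirIdx (I : Type v) [Preorder I] : Prop :=
  Nonempty I ∧ ∀ i j : I, ∃ k, i ≤ k ∧ j ≤ k

/-- Convergence of a net with respect to a topology `t` on `X`. -/
def NetConv {X : Type u} (t : TopologicalSpace X) {I : Type v} [Preorder I]
    (net : I → X) (x : X) : Prop :=
  ∀ U : Set X, t.IsOpen U → x ∈ U → ∃ k, ∀ i, k ≤ i → net i ∈ U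

section
variable {X : Type u} [TopologicalSpace X]

/-- The specialisation order: `x ≤ y` iff `x ∈ cl {y}`. -/
def sLE (x y : X) : Prop := x ∈ closure ({y} : Set X)

/-- `b` is an upper bound of `A` in the specialisation order. -/
def IsUB (A : Set X) (b : X) : Prop := ∀ a ∈ A, sLE a b

/-- `s` is the supremum (least upper bound) of `A` in the specialisation order. -/
def IsSupSpec (A : Set X) (s : X) : Prop := IsUB A s ∧ ∀ b, IsUB A b → sLE s b

/-- The upper set `↑x` in the specialisation order. -/
def upS (x : X) : Set X := {u | sLE x u}

/-- The lower set `↓A` in the specialisation order. -/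
def downS (A : Set X) : Set X := {u | ∃ a ∈ A, sLE u a}

/-- The Irr-way-below relation: `x ≪_Irr y` iff every irreducible set `E`
whose supremum exists and dominates `y` meets `↑x`. -/
def wbIrr (x y : X) : Prop :=
  ∀ E : Set X, IsIrreducible E → ∀ s : X, IsSupSpec E s → sLE y s → (E ∩ upS x).Nonempty

/-- `↡x = {u | u ≪_Irr x}`. -/
def ddIrr (x : X) : Set X := {u | wbIrr u x}

/-- `↟x = {u | x ≪_Irr u}`. -/
def uuIrr (x : X) : Set X := {u | wbIrr x u}

/-- A directed subset (w.r.t. the specialisation order): nonempty and every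
pair of elements has an upper bound in the set. -/
def DirectedSub (D : Set X) : Prop :=
  D.Nonempty ∧ ∀ a ∈ D, ∀ b ∈ D, ∃ c ∈ D, sLE a c ∧ sLE b c

/-- `e` is an eventual lower bound of the net `net`. -/
def EvLB {I : Type v} [Preorder I] (net : I → X) (e : X) : Prop :=
  ∃ k, ∀ i, k ≤ i → sLE e (net i)

/-- Irr-convergence: the net `net` Irr-converges to `y` iff there is an
irreducible set `E` with a supremum `≥ y` consisting of eventual lower
bounds of the net. -/
def IrrConv {I : Type v} [Preorder I] (net : I → X) (y : X) : Prop :=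
  ∃ E : Set X, IsIrreducible E ∧ (∃ s, IsSupSpec E s ∧ sLE y s) ∧ ∀ e ∈ E, EvLB net e

end

/-- Sup-sobriety: every closed irreducible set having a supremum is the
closure of the singleton of its supremum. -/
def SupSober (X : Type u) [TopologicalSpace X] : Prop :=
  ∀ F : Set X, IsClosed F → IsIrreducible F → ∀ s : X, IsSupSpec F s → F = closure {s}

/-- `U` is open in the irreducibly-derived topology `τ_SI`. -/
def SIOpen {X : Type u} [TopologicalSpace X] (U : Set X) : Prop :=
  IsOpen U ∧ ∀ E : Set X, IsIrreducible E → ∀ s : X, IsSupSpec E s → s ∈ U →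
    (E ∩ U).Nonempty

/-- Interior with respect to the irreducibly-derived topology. -/
def SIint {X : Type u} [TopologicalSpace X] (A : Set X) : Set X :=
  ⋃₀ {U : Set X | SIOpen U ∧ U ⊆ A}

/-- Irr-continuity: every `↡x` is irreducible with supremum `x`. -/
def IrrCont (X : Type u) [TopologicalSpace X] : Prop :=
  ∀ x : X, IsIrreducible (ddIrr x) ∧ IsSupSpec (ddIrr x) x

/-- SI⁻-continuity: every `↡x` contains a directed subset with supremum `x`. -/
def SImCont (X : Type u) [TopologicalSpace X] : Prop :=
  ∀ x : X, ∃ D : Set X, D ⊆ ddIrr x ∧ DirectedSub D ∧ IsSupSpec D x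

/-- The `*`-property: for every irreducible `F` with a supremum there is a
directed subset of `↓F` with the same supremum. -/
def StarProp (X : Type u) [TopologicalSpace X] : Prop :=
  ∀ F : Set X, IsIrreducible F → ∀ s : X, IsSupSpec F s →
    ∃ D : Set X, D ⊆ downS F ∧ DirectedSub D ∧ IsSupSpec D s

/-- The `⊕`-property: every `↟x` is open. -/
def OplusProp (X : Type u) [TopologicalSpace X] : Prop :=
  ∀ x : X, IsOpen (uuIrr x)

/-- C-space: for every open `U` and `x ∈ U` there is `y ∈ U` with
`x ∈ int (↑y)`. -/
def CSpace (X : Type u) [TopologicalSpace X] : Prop :=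
  ∀ U : Set X, IsOpen U → ∀ x ∈ U, ∃ y ∈ U, x ∈ interior (upS y)

/-- The Irr-convergence class is topological: some topology induces it. -/
def IrrTopological (X : Type u) [TopologicalSpace X] : Prop :=
  ∃ t : TopologicalSpace X, ∀ (I : Type u) [Preorder I], IsDirIdx I →
    ∀ (net : I → X) (y : X), IrrConv net y ↔ NetConv t net y

/-- The family `τ_𝓘` of sets induced by the Irr-convergence class. -/
def tauI (X : Type u) [TopologicalSpace X] : Set (Set X) :=
  {U | ∀ (I : Type u) [Preorder I], IsDirIdx I → ∀ (net : I → X) (y : X),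
      IrrConv net y → y ∈ U → ∃ k, ∀ i, k ≤ i → net i ∈ U}

/-- Kelley's (Iterated limits) axiom for the Irr-convergence class. -/
def IterLimAxiom (X : Type u) [TopologicalSpace X] : Prop :=
  ∀ (I : Type u) [Preorder I], IsDirIdx I →
    ∀ (J : I → Type u) [∀ i, Preorder (J i)], (∀ i, IsDirIdx (J i)) →
      ∀ (xi : I → X) (xx : ∀ i, J i → X) (x : X),
        IrrConv xi x → (∀ i, IrrConv (xx i) (xi i)) →
        IrrConv (fun p : I × (∀ i, J i) => xx p.1 (p.2 p.1)) x
section AuxInterp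
variable {X : Type u} [TopologicalSpace X]

lemma sLE_refl' (a : X) : sLE a a := subset_closure rfl

lemma sLE_trans' {a b c : X} (hab : sLE a b) (hbc : sLE b c) : sLE a c := by
  have : closure ({b} : Set X) ⊆ closure ({c} : Set X) :=
    closure_minimal (Set.singleton_subset_iff.2 hbc) isClosed_closure
  exact this hab

lemma directed_irreducible {D : Set X} (hD : DirectedSub D) : IsIrreducible D := by
  refine ⟨hD.1, fun u v hu hv ⟨a, haD, hau⟩ ⟨b, hbD, hbv⟩ => ?_⟩
  obtain ⟨c, hcD, hac, hbc⟩ := hD.2 a haD b hbD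
  have hcu : c ∈ u := by
    have := mem_closure_iff.1 hac u hu hau
    simpa using this
  have hcv : c ∈ v := by
    have := mem_closure_iff.1 hbc v hv hbv
    simpa using this
  exact ⟨c, hcD, hcu, hcv⟩

lemma wbIrr_mono_left {z u d : X} (hzu : sLE z u) (h : wbIrr u d) : wbIrr z d := by
  intro E hE s hs hds
  obtain ⟨w, hwE, hw⟩ := h E hE s hs hds
  exact ⟨w, hwE, sLE_trans' hzu hw⟩

lemma wbIrr_mono_right {a d d' : X} (h : wbIrr a d) (hdd : sLE d d') : wbIrr a d' := by
  intro E hE s hs hds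
  exact h E hE s hs (sLE_trans' hdd hds)

end AuxInterp

/-- interpolation in SI⁻-continuous spaces. -/
theorem wbIrr_interpolation_of_sImCont {X : Type u} [TopologicalSpace X] [T0Space X]
    (hX : SImCont X) (z x : X) (hzx : wbIrr z x) :
    ∃ y : X, wbIrr z y ∧ wbIrr y x := by
  classical
  choose f hf1 hf2 hf3 using hX
  set D := f x with hDdef
  have hD1 := hf1 x
  have hD2 := hf2 x
  have hD3 := hf3 x
  -- A = union of the f d for d ∈ D
  set A : Set X := {u | ∃ d ∈ D, u ∈ f d} with hA
  -- A is directed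
  have hkey : ∀ a : X, ∀ d ∈ D, wbIrr a d → ∃ c ∈ f d, sLE a c := by
    intro a d _ had
    have := had (f d) (directed_irreducible (hf2 d)) d (hf3 d) (sLE_refl' d)
    obtain ⟨c, hcf, hc⟩ := this
    exact ⟨c, hcf, hc⟩
  have hAdir : DirectedSub A := by
    constructor
    · obtain ⟨d, hd⟩ := hD2.1
      obtain ⟨u, hu⟩ := (hf2 d).1
      exact ⟨u, d, hd, hu⟩
    · rintro a ⟨d, hdD, haf⟩ b ⟨d', hd'D, hbf⟩
      obtain ⟨d'', hd''D, hdd'', hd'd''⟩ := hD2.2 d hdD d' hd'D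
      have had'' : wbIrr a d'' := wbIrr_mono_right (hf1 d haf) hdd''
      have hbd'' : wbIrr b d'' := wbIrr_mono_right (hf1 d' hbf) hd'd''
      obtain ⟨ca, hcaf, hca⟩ := hkey a d'' hd''D had''
      obtain ⟨cb, hcbf, hcb⟩ := hkey b d'' hd''D hbd''
      obtain ⟨c, hcf, hcac, hcbc⟩ := (hf2 d'').2 ca hcaf cb hcbf
      exact ⟨c, ⟨d'', hd''D, hcf⟩, sLE_trans' hca hcac, sLE_trans' hcb hcbc⟩
  -- sup of A is x
  have hAsup : IsSupSpec A x := by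
    constructor
    · rintro a ⟨d, hdD, haf⟩
      exact sLE_trans' ((hf3 d).1 a haf) (hD3.1 d hdD)
    · intro b hb
      refine hD3.2 b fun d hdD => ?_
      exact (hf3 d).2 b fun a haf => hb a ⟨d, hdD, haf⟩
  obtain ⟨u, ⟨d, hdD, huf⟩, hzu⟩ :=
    hzx A (directed_irreducible hAdir) x hAsup (sLE_refl' x)
  exact ⟨d, wbIrr_mono_left hzu (hf1 d huf), hD1 hdD⟩
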